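/- arXiv:2205.13182 — 2 statements merged into one kernel-verified Lean document; each statement's English description precedes it below -/
import Mathlib

section
/- Let Y ∈ ℝ^{m×n} with singular value decomposition Y = U Σ Vᵀ (U ∈ ℝ^{m×m} and V ∈ ℝ^{n×n} orthogonal, Σ ∈ ℝ^{m×n} diagonal with nonnegative entries), and let γ > 0. Then the matrix L* = U (Σ − (1/(2γ))·I)₊ Vᵀ, where (M₊)_{i,j} = max(M_{i,j}, 0), is a global minimizer over L ∈ ℝ^{m×n} of the Nuclear-Norm Penalization objective h(L) = ‖L‖_* + γ‖Y − L‖_F², i.e. for every L ∈ ℝ^{m×n}, ‖L*‖_* + γ‖Y − L*‖_F² ≤ ‖L‖_* + γ‖Y − L‖_F². -/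
open Matrix

/-- The nuclear norm of a real matrix: the trace of the positive semidefinite
square root of `Aᵀ * A` (equivalently, the sum of the singular values of `A`). -/
noncomputable def nuclearNorm {m n : ℕ} (A : Matrix (Fin m) (Fin n) ℝ) : ℝ :=
  (((Matrix.posSemidef_conjTranspose_mul_self A).1.eigenvectorUnitary : Matrix (Fin n) (Fin n) ℝ) *
    diagonal ((RCLike.ofReal : ℝ → ℝ) ∘ (√·) ∘ (Matrix.posSemidef_conjTranspose_mul_self A).1.eigenvalues) *
    (star (Matrix.posSemidef_conjTranspose_mul_self A).1.eigenvectorUnitary :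
      Matrix (Fin n) (Fin n) ℝ)).trace

/-- The Frobenius norm of a real matrix. -/
noncomputable def frobNorm {m n : ℕ} (A : Matrix (Fin m) (Fin n) ℝ) : ℝ :=
  Real.sqrt (∑ i, ∑ j, (A i j) ^ 2)

/-!
`G = 2γ (Y - L*) = U D Vᵀ`, where `D = 2γ (Σ - (Σ - (2γ)⁻¹)₊)` is rectangular diagonal with
entries in `[0, 1]`, is a subgradient of the nuclear norm at `L*`. Indeed `G` is a contraction,
so `⟪G, L⟫ ≤ ‖L‖_*` for every `L`, and `⟪G, L*⟫ = ‖L*‖_*` because `D` is `1` wherever a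
thresholded singular value is positive. Combined with the convexity inequality
`‖Y - L‖_F² ≥ ‖Y - L*‖_F² + 2⟪Y - L*, L* - L⟫` this gives the claim.
-/

open scoped MatrixOrder

def Matrix.IsRectDiag {α : Type*} [Zero α] {m n : ℕ} (E : Matrix (Fin m) (Fin n) α) : Prop :=
  ∀ (i : Fin m) (j : Fin n), (i : ℕ) ≠ j → E i j = 0

namespace Matrix.IsRectDiag

variable {α : Type*} {m n : ℕ}

lemma sum_col [AddCommMonoid α] {E : Matrix (Fin m) (Fin n) α} (hE : E.IsRectDiag) (j : Fin n) :
    ∑ i, E i j = if h : (j : ℕ) < m then E ⟨j, h⟩ j else 0 := by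
  split_ifs with h
  · exact Finset.sum_eq_single _ (fun i _ hi => hE i j fun hij => hi (Fin.ext hij)) (by simp)
  · exact Finset.sum_eq_zero fun i _ => hE i j (by omega)

lemma hadamard [MulZeroClass α] {E : Matrix (Fin m) (Fin n) α} (hE : E.IsRectDiag)
    (F : Matrix (Fin m) (Fin n) α) : (E ⊙ F).IsRectDiag := fun i j hij => by
  simp [hE i j hij]

lemma transpose_mul [NonUnitalNonAssocSemiring α] {E F : Matrix (Fin m) (Fin n) α}
    (hE : E.IsRectDiag) (hF : F.IsRectDiag) :
    Eᵀ * F = diagonal fun j => ∑ i, E i j * F i j := by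
  ext j k
  by_cases hjk : j = k
  · subst hjk
    simp [mul_apply]
  · rw [mul_apply, diagonal_apply_ne _ hjk]
    refine Finset.sum_eq_zero fun i _ => ?_
    by_cases hij : (i : ℕ) = j
    · rw [transpose_apply, hF i k (hij ▸ Fin.val_ne_of_ne hjk), mul_zero]
    · rw [transpose_apply, hE i j hij, zero_mul]

lemma transpose_mul_self_le_one {E : Matrix (Fin m) (Fin n) ℝ} (hE : E.IsRectDiag)
    (hE1 : ∀ i j, |E i j| ≤ 1) : Eᵀ * E ≤ 1 := by
  rw [hE.transpose_mul hE, le_iff, ← diagonal_one, diagonal_sub, posSemidef_diagonal_iff]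
  intro j
  have hcol := (hE.hadamard E).sum_col j
  simp only [hadamard_apply] at hcol
  rw [sub_nonneg, hcol]
  split_ifs with h
  · simpa [← sq, sq_le_one_iff_abs_le_one] using hE1 ⟨j, h⟩ j
  · exact zero_le_one

end Matrix.IsRectDiag

section NuclearNorm

variable {m n : ℕ}

lemma nuclearNorm_eq_trace_sqrt (A : Matrix (Fin m) (Fin n) ℝ) :
    nuclearNorm A = (CFC.sqrt (Aᴴ * A)).trace := by
  rw [CFC.sqrt_eq_real_sqrt _ (posSemidef_conjTranspose_mul_self A).nonneg,
    cfcₙ_eq_cfc (hf0 := by simp), (posSemidef_conjTranspose_mul_self A).1.cfc_eq]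
  rfl

lemma nuclearNorm_eq_trace_of_mul_self {A : Matrix (Fin m) (Fin n) ℝ}
    {B : Matrix (Fin n) (Fin n) ℝ} (hB : 0 ≤ B) (hBA : B * B = Aᵀ * A) :
    nuclearNorm A = B.trace := by
  rw [nuclearNorm_eq_trace_sqrt, conjTranspose_eq_transpose_of_trivial, ← hBA,
    CFC.sqrt_mul_self B hB]

lemma nuclearNorm_eq_sum_sqrt_eigenvalues (A : Matrix (Fin m) (Fin n) ℝ) :
    nuclearNorm A = ∑ j, √((posSemidef_conjTranspose_mul_self A).1.eigenvalues j) := by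
  rw [nuclearNorm, trace_mul_cycle, Unitary.coe_star_mul_self, Matrix.one_mul, trace_diagonal]
  rfl

lemma trace_transpose_mul_le_sum_sqrt {ι κ : Type*} [Fintype ι] [Fintype κ]
    (A B : Matrix ι κ ℝ) :
    (Aᵀ * B).trace ≤ ∑ j, √((Aᵀ * A) j j) * √((Bᵀ * B) j j) := by
  simp only [trace, diag_apply, mul_apply, transpose_apply, ← sq]
  exact Finset.sum_le_sum fun j _ => Real.sum_mul_le_sqrt_mul_sqrt _ _ _

lemma trace_transpose_mul_le_nuclearNorm {G : Matrix (Fin m) (Fin n) ℝ} (hG : Gᵀ * G ≤ 1)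
    (L : Matrix (Fin m) (Fin n) ℝ) : (Gᵀ * L).trace ≤ nuclearNorm L := by
  set hL := (posSemidef_conjTranspose_mul_self L).1
  set Q : Matrix (Fin n) (Fin n) ℝ := (hL.eigenvectorUnitary : Matrix (Fin n) (Fin n) ℝ)
  have hstar : star Q = Qᵀ := by rw [star_eq_conjTranspose, conjTranspose_eq_transpose_of_trivial]
  have hQ : Qᵀ * Q = 1 := hstar ▸ Unitary.coe_star_mul_self hL.eigenvectorUnitary
  have hLQ : (L * Q)ᵀ * (L * Q) = diagonal hL.eigenvalues := by
    have h : star Q * (Lᴴ * L) * Q = diagonal (RCLike.ofReal ∘ hL.eigenvalues) := by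
      rw [← hL.conjStarAlgAut_star_eigenvectorUnitary, Unitary.conjStarAlgAut_star_apply]
    simpa [hstar, transpose_mul, Matrix.mul_assoc] using h
  have hGQ : ∀ j, ((G * Q)ᵀ * (G * Q)) j j ≤ 1 := fun j => by
    have h := (le_iff.mp (star_left_conjugate_le_conjugate hG Q)).diag_nonneg (i := j)
    simpa [hstar, transpose_mul, Matrix.mul_assoc, hQ] using h
  -- In an eigenbasis `Q` of `LᵀL` the columns of `L Q` have lengths `√λⱼ`, those of `G Q` at most 1.
  calc (Gᵀ * L).trace = (Gᵀ * L * (Q * Qᵀ)).trace := by rw [mul_eq_one_comm.mp hQ, Matrix.mul_one]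
    _ = ((G * Q)ᵀ * (L * Q)).trace := by
        rw [← Matrix.mul_assoc, trace_mul_cycle, transpose_mul, Matrix.mul_assoc, Matrix.mul_assoc,
          Matrix.mul_assoc]
    _ ≤ ∑ j, √(((G * Q)ᵀ * (G * Q)) j j) * √(((L * Q)ᵀ * (L * Q)) j j) :=
        trace_transpose_mul_le_sum_sqrt _ _
    _ ≤ ∑ j, √(hL.eigenvalues j) := Finset.sum_le_sum fun j _ => by
        rw [hLQ, diagonal_apply_eq]
        exact mul_le_of_le_one_left (Real.sqrt_nonneg _) (Real.sqrt_le_one.mpr (hGQ j))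
    _ = nuclearNorm L := (nuclearNorm_eq_sum_sqrt_eigenvalues L).symm

end NuclearNorm

section Orthogonal

variable {m n : ℕ} {U : Matrix (Fin m) (Fin m) ℝ} {V : Matrix (Fin n) (Fin n) ℝ}

lemma transpose_mul_orthogonal_conj (hU : Uᵀ * U = 1) (A B : Matrix (Fin m) (Fin n) ℝ) :
    (U * A * Vᵀ)ᵀ * (U * B * Vᵀ) = V * (Aᵀ * B) * Vᵀ := by
  simp only [transpose_mul, transpose_transpose, Matrix.mul_assoc]
  rw [← Matrix.mul_assoc Uᵀ, hU, Matrix.one_mul]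

lemma trace_orthogonal_conj (hV : Vᵀ * V = 1) (M : Matrix (Fin n) (Fin n) ℝ) :
    (V * M * Vᵀ).trace = M.trace := by
  rw [trace_mul_cycle, hV, Matrix.one_mul]

lemma orthogonal_conj_le_one (hV : Vᵀ * V = 1) {M : Matrix (Fin n) (Fin n) ℝ} (hM : M ≤ 1) :
    V * M * Vᵀ ≤ 1 := by
  have h := star_left_conjugate_le_conjugate hM Vᵀ
  rwa [star_eq_conjTranspose, conjTranspose_eq_transpose_of_trivial, transpose_transpose,
    Matrix.mul_one, mul_eq_one_comm.mp hV] at h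

lemma nuclearNorm_orthogonal_conj (hU : Uᵀ * U = 1) (hV : Vᵀ * V = 1)
    (A : Matrix (Fin m) (Fin n) ℝ) : nuclearNorm (U * A * Vᵀ) = nuclearNorm A := by
  set B := CFC.sqrt (Aᴴ * A)
  have hB : 0 ≤ B := CFC.sqrt_nonneg _
  have hBA : B * B = Aᵀ * A := by
    rw [CFC.sqrt_mul_sqrt_self _ (posSemidef_conjTranspose_mul_self A).nonneg,
      conjTranspose_eq_transpose_of_trivial]
  rw [nuclearNorm_eq_trace_sqrt A, ← trace_orthogonal_conj hV B]
  refine nuclearNorm_eq_trace_of_mul_self ?_ ?_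
  · simpa [star_eq_conjTranspose, conjTranspose_eq_transpose_of_trivial] using
      star_left_conjugate_le_conjugate hB Vᵀ
  · rw [transpose_mul_orthogonal_conj hU, ← hBA]
    simp only [Matrix.mul_assoc]
    rw [← Matrix.mul_assoc Vᵀ, hV, Matrix.one_mul]

end Orthogonal

lemma Matrix.IsRectDiag.nuclearNorm_eq_sum {m n : ℕ} {E : Matrix (Fin m) (Fin n) ℝ}
    (hE : E.IsRectDiag) (hE0 : ∀ i j, 0 ≤ E i j) : nuclearNorm E = ∑ j, ∑ i, E i j := by
  rw [nuclearNorm_eq_trace_of_mul_self (B := diagonal fun j => ∑ i, E i j), trace_diagonal]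
  · exact (PosSemidef.diagonal fun j => Finset.sum_nonneg fun i _ => hE0 i j).nonneg
  · rw [diagonal_mul_diagonal, hE.transpose_mul hE]
    congr 1
    ext j
    have hcol := (hE.hadamard E).sum_col j
    simp only [hadamard_apply] at hcol
    rw [hcol, hE.sum_col j]
    split_ifs <;> simp

section Frobenius

variable {m n : ℕ}

lemma frobNorm_sq (A : Matrix (Fin m) (Fin n) ℝ) : frobNorm A ^ 2 = (Aᵀ * A).trace := by
  rw [frobNorm, Real.sq_sqrt (by positivity)]
  simp only [trace, diag_apply, mul_apply, transpose_apply, ← sq]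
  exact Finset.sum_comm

lemma frobNorm_sq_add_two_mul_trace_le (A B : Matrix (Fin m) (Fin n) ℝ) :
    frobNorm B ^ 2 + 2 * (Bᵀ * (A - B)).trace ≤ frobNorm A ^ 2 := by
  obtain ⟨C, rfl⟩ : ∃ C, A = B + C := ⟨A - B, by abel⟩
  have hC := sq_nonneg (frobNorm C)
  rw [frobNorm_sq, frobNorm_sq] at *
  rw [add_sub_cancel_left, transpose_add, Matrix.add_mul, Matrix.mul_add, Matrix.mul_add,
    trace_add, trace_add, trace_add, ← trace_transpose (Cᵀ * B), transpose_mul, transpose_transpose]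
  linarith

end Frobenius

def softThresholdDiag {m n : ℕ} (c : ℝ) (S : Matrix (Fin m) (Fin n) ℝ) :
    Matrix (Fin m) (Fin n) ℝ :=
  of fun i j => max (S i j - if (i : ℕ) = j then c else 0) 0

section SoftThreshold

variable {m n : ℕ} {c : ℝ} {S : Matrix (Fin m) (Fin n) ℝ}

lemma Matrix.IsRectDiag.softThresholdDiag (hS : S.IsRectDiag) (c : ℝ) :
    (softThresholdDiag c S).IsRectDiag := fun i j hij => by
  simp [_root_.softThresholdDiag, hij, hS i j hij]

lemma softThresholdDiag_nonneg (c : ℝ) (S : Matrix (Fin m) (Fin n) ℝ) (i : Fin m) (j : Fin n) :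
    0 ≤ softThresholdDiag c S i j :=
  le_max_right _ _

lemma abs_inv_mul_sub_softThresholdDiag_le_one (hc : 0 < c) (hS0 : ∀ i j, 0 ≤ S i j)
    (i : Fin m) (j : Fin n) : |c⁻¹ * (S i j - softThresholdDiag c S i j)| ≤ 1 := by
  have hgap : S i j - softThresholdDiag c S i j ∈ Set.Icc 0 c := by
    simp only [softThresholdDiag, of_apply]
    constructor <;> split_ifs <;> grind [hS0 i j]
  rw [abs_le, ← inv_mul_cancel₀ hc.ne']
  constructor <;> nlinarith [hgap.1, hgap.2, inv_pos.mpr hc]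

lemma inv_mul_sub_softThresholdDiag_mul_self (hc : c ≠ 0) (hS : S.IsRectDiag)
    (i : Fin m) (j : Fin n) :
    c⁻¹ * (S i j - softThresholdDiag c S i j) * softThresholdDiag c S i j =
      softThresholdDiag c S i j := by
  by_cases hij : (i : ℕ) = j
  · simp only [softThresholdDiag, of_apply, if_pos hij]
    rcases le_total (S i j - c) 0 with h | h
    · simp [max_eq_right h]
    · rw [max_eq_left h, sub_sub_cancel, inv_mul_cancel₀ hc, one_mul]
  · rw [hS.softThresholdDiag c i j hij, mul_zero]

end SoftThreshold

theorem nnp_soft_threshold_minimizer_general {m n : ℕ}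
    (Y : Matrix (Fin m) (Fin n) ℝ)
    (U : Matrix (Fin m) (Fin m) ℝ) (S : Matrix (Fin m) (Fin n) ℝ)
    (V : Matrix (Fin n) (Fin n) ℝ) (γ : ℝ) (hγ : 0 < γ)
    (hU : Uᵀ * U = 1)
    (hV : Vᵀ * V = 1)
    (hSdiag : ∀ (i : Fin m) (j : Fin n), (i : ℕ) ≠ (j : ℕ) → S i j = 0)
    (hSnonneg : ∀ (i : Fin m) (j : Fin n), 0 ≤ S i j)
    (hY : Y = U * S * Vᵀ)
    (Lstar : Matrix (Fin m) (Fin n) ℝ)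
    (hLstar : Lstar = U * (Matrix.of fun i j =>
        max (S i j - if (i : ℕ) = (j : ℕ) then 1 / (2 * γ) else 0) 0) * Vᵀ) :
    ∀ L : Matrix (Fin m) (Fin n) ℝ,
      nuclearNorm Lstar + γ * (frobNorm (Y - Lstar)) ^ 2 ≤
        nuclearNorm L + γ * (frobNorm (Y - L)) ^ 2 := by
  intro L
  set c := 1 / (2 * γ)
  set T := softThresholdDiag c S
  change Lstar = U * T * Vᵀ at hLstar
  have hc : 0 < c := by positivity
  have hT : T.IsRectDiag := Matrix.IsRectDiag.softThresholdDiag hSdiag c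
  set D := c⁻¹ • (S - T)
  have hD : D.IsRectDiag := fun i j hij => by simp [D, hSdiag i j hij, hT i j hij]
  have hG : U * D * Vᵀ = (2 * γ) • (Y - Lstar) := by
    rw [hY, hLstar, ← Matrix.sub_mul, ← Matrix.mul_sub, ← Matrix.smul_mul, ← Matrix.mul_smul]
    simp [D, c]
  have hdual : ((U * D * Vᵀ)ᵀ * L).trace ≤ nuclearNorm L := by
    refine trace_transpose_mul_le_nuclearNorm ?_ L
    rw [transpose_mul_orthogonal_conj hU]
    exact orthogonal_conj_le_one hV (hD.transpose_mul_self_le_one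
      (abs_inv_mul_sub_softThresholdDiag_le_one hc hSnonneg))
  have hattain : ((U * D * Vᵀ)ᵀ * Lstar).trace = nuclearNorm Lstar := by
    rw [hLstar, transpose_mul_orthogonal_conj hU, trace_orthogonal_conj hV,
      nuclearNorm_orthogonal_conj hU hV, hT.nuclearNorm_eq_sum (softThresholdDiag_nonneg c S),
      hD.transpose_mul hT, trace_diagonal]
    simp only [D, Matrix.smul_apply, Matrix.sub_apply, smul_eq_mul]
    exact Finset.sum_congr rfl fun j _ => Finset.sum_congr rfl fun i _ =>
      inv_mul_sub_softThresholdDiag_mul_self hc.ne' hSdiag i j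
  have hconv := frobNorm_sq_add_two_mul_trace_le (Y - L) (Y - Lstar)
  rw [sub_sub_sub_cancel_left, Matrix.mul_sub, trace_sub] at hconv
  rw [hG, transpose_smul, Matrix.smul_mul, trace_smul, smul_eq_mul] at hdual hattain
  nlinarith [mul_le_mul_of_nonneg_left hconv hγ.le]

/-- Nuclear-Norm Penalization: the soft-thresholded SVD `L* = U (Σ − (1/(2γ))·I)₊ Vᵀ`
is a global minimizer of `L ↦ ‖L‖_* + γ‖Y − L‖_F²`. -/
theorem nnp_soft_threshold_minimizer {m n : ℕ}
    (Y : Matrix (Fin m) (Fin n) ℝ)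
    (U : Matrix (Fin m) (Fin m) ℝ) (S : Matrix (Fin m) (Fin n) ℝ)
    (V : Matrix (Fin n) (Fin n) ℝ) (γ : ℝ) (hγ : 0 < γ)
    (hU : Uᵀ * U = 1) (hU' : U * Uᵀ = 1)
    (hV : Vᵀ * V = 1) (hV' : V * Vᵀ = 1)
    (hSdiag : ∀ (i : Fin m) (j : Fin n), (i : ℕ) ≠ (j : ℕ) → S i j = 0)
    (hSnonneg : ∀ (i : Fin m) (j : Fin n), 0 ≤ S i j)
    (hY : Y = U * S * Vᵀ)
    (Lstar : Matrix (Fin m) (Fin n) ℝ)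
    (hLstar : Lstar = U * (Matrix.of fun i j =>
        max (S i j - if (i : ℕ) = (j : ℕ) then 1 / (2 * γ) else 0) 0) * Vᵀ) :
    ∀ L : Matrix (Fin m) (Fin n) ℝ,
      nuclearNorm Lstar + γ * (frobNorm (Y - Lstar)) ^ 2 ≤
        nuclearNorm L + γ * (frobNorm (Y - L)) ^ 2 :=
  nnp_soft_threshold_minimizer_general Y U S V γ hγ hU hV hSdiag hSnonneg hY Lstar hLstar
end

section
/- Let n, k, k₀ be natural numbers with k₀ ≤ k and 2k − k₀ ≤ n, and let {e₁, …, e_n} be the standard basis of ℝⁿ. Let W = span{e₁, …, e_k} and W′ = span({e₁, …, e_{k₀}} ∪ {e_{k+1}, …, e_{2k−k₀}}), with orthogonal projections P_W and P_{W′} onto W and W′. Then the projection metric d_proj(W, W′) = ‖P_W − P_{W′}‖ (operator norm) equals 1 whenever k₀ < k, and equals 0 when k₀ = k. In particular, d_proj(W, W′) does not depend on k₀ as long as k₀ < k. -/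
/-!
Any two orthogonal projections satisfy `‖P_K - P_L‖ ≤ 1`. When `k₀ < k`, the basis vector
`e_{k₀+1}` lies in `W` and is orthogonal to `W'`, so `P_W - P_{W'}` fixes it and the bound is
attained. When `k₀ = k` the two subspaces coincide.
-/

open Submodule

section

variable {𝕜 E : Type*} [RCLike 𝕜] [NormedAddCommGroup E] [InnerProductSpace 𝕜 E]
  (K L : Submodule 𝕜 E) [K.HasOrthogonalProjection] [L.HasOrthogonalProjection]

/- Split `y = P_K x - P_L x` along `K ⊕ Kᗮ`: the two parts are `P_K (P_{Lᗮ} x)` and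
`-P_{Kᗮ} (P_L x)`, and `‖P_{Lᗮ} x‖² + ‖P_L x‖² = ‖x‖²`. -/
theorem norm_starProjection_sub_starProjection_apply_le (x : E) :
    ‖K.starProjection x - L.starProjection x‖ ≤ ‖x‖ := by
  set y := K.starProjection x - L.starProjection x
  have hidem : K.starProjection (K.starProjection x) = K.starProjection x :=
    starProjection_eq_self_iff.2 (K.starProjection_apply_mem x)
  have hK : K.starProjection y = K.starProjection (Lᗮ.starProjection x) := by
    simp only [y, starProjection_orthogonal_val, map_sub, hidem]
  have hKperp : Kᗮ.starProjection y = -Kᗮ.starProjection (L.starProjection x) := by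
    simp only [y, starProjection_orthogonal_val, map_sub, hidem]
    abel
  have hsq : ‖y‖ ^ 2 ≤ ‖x‖ ^ 2 :=
    calc ‖y‖ ^ 2 = ‖K.starProjection y‖ ^ 2 + ‖Kᗮ.starProjection y‖ ^ 2 :=
          norm_sq_eq_add_norm_sq_starProjection y K
      _ = ‖K.starProjection (Lᗮ.starProjection x)‖ ^ 2
            + ‖Kᗮ.starProjection (L.starProjection x)‖ ^ 2 := by rw [hK, hKperp, norm_neg]
      _ ≤ ‖Lᗮ.starProjection x‖ ^ 2 + ‖L.starProjection x‖ ^ 2 := by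
          gcongr <;> exact norm_starProjection_apply_le _ _
      _ = ‖x‖ ^ 2 := by rw [add_comm, ← norm_sq_eq_add_norm_sq_starProjection x L]
  exact (pow_le_pow_iff_left₀ (norm_nonneg _) (norm_nonneg _) two_ne_zero).1 hsq

theorem norm_starProjection_sub_starProjection_le :
    ‖K.starProjection - L.starProjection‖ ≤ 1 :=
  ContinuousLinearMap.opNorm_le_bound _ zero_le_one fun x => by
    simpa using norm_starProjection_sub_starProjection_apply_le K L x

variable {K L} in
theorem norm_starProjection_sub_starProjection_eq_one {e : E} (heK : e ∈ K) (heL : e ∈ Lᗮ)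
    (he : e ≠ 0) : ‖K.starProjection - L.starProjection‖ = 1 := by
  refine (norm_starProjection_sub_starProjection_le K L).antisymm ?_
  have hfix : (K.starProjection - L.starProjection) e = e := by
    simp [starProjection_eq_self_iff.2 heK, (starProjection_apply_eq_zero_iff L).2 heL]
  have hle := (K.starProjection - L.starProjection).le_opNorm e
  rw [hfix] at hle
  exact (le_mul_iff_one_le_left (norm_pos_iff.2 he)).1 hle

end

theorem EuclideanSpace.single_mem_orthogonal_span_single {𝕜 ι : Type*} [RCLike 𝕜] [Fintype ι]
    [DecidableEq ι] {p : ι → Prop} {i : ι} (hi : ¬ p i) :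
    EuclideanSpace.single i (1 : 𝕜) ∈
      (span 𝕜 {x | ∃ j, p j ∧ x = EuclideanSpace.single j (1 : 𝕜)})ᗮ := by
  rw [← span_singleton_le_iff_mem, ← isOrtho_iff_le, isOrtho_span]
  rintro _ rfl _ ⟨j, hj, rfl⟩
  have hij : i ≠ j := by rintro rfl; exact hi hj
  simp [EuclideanSpace.inner_single_left, hij]

theorem projection_metric_coordinate_subspaces_general {n k k₀ : ℕ}
    (h₂ : 2 * k - k₀ ≤ n) :
    let W : Submodule ℝ (EuclideanSpace ℝ (Fin n)) :=
      Submodule.span ℝ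
        {x | ∃ j : Fin n, (j : ℕ) < k ∧ x = EuclideanSpace.single j (1 : ℝ)}
    let W' : Submodule ℝ (EuclideanSpace ℝ (Fin n)) :=
      Submodule.span ℝ
        {x | ∃ j : Fin n, ((j : ℕ) < k₀ ∨ (k ≤ (j : ℕ) ∧ (j : ℕ) < 2 * k - k₀)) ∧
          x = EuclideanSpace.single j (1 : ℝ)}
    let PW : EuclideanSpace ℝ (Fin n) →L[ℝ] EuclideanSpace ℝ (Fin n) :=
      W.subtypeL.comp (orthogonalProjection W)
    let PW' : EuclideanSpace ℝ (Fin n) →L[ℝ] EuclideanSpace ℝ (Fin n) :=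
      W'.subtypeL.comp (orthogonalProjection W')
    (k₀ < k → ‖PW - PW'‖ = 1) ∧ (k₀ = k → ‖PW - PW'‖ = 0) := by
  intro W W' PW PW'
  refine ⟨fun hlt => ?_, fun heq => ?_⟩
  · let i : Fin n := ⟨k₀, by omega⟩
    exact norm_starProjection_sub_starProjection_eq_one (subset_span ⟨i, hlt, rfl⟩)
      (EuclideanSpace.single_mem_orthogonal_span_single (by simp only [i]; omega))
      (by simp)
  · subst heq
    have hW : W' = W := by
      simp only [W', W, Nat.two_mul, Nat.add_sub_cancel]
      congr! 6
      omega
    show ‖W.starProjection - W'.starProjection‖ = 0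
    rw [hW, sub_self, norm_zero]

/-- For `W = span{e₁, …, e_k}` and `W′ = span({e₁, …, e_{k₀}} ∪ {e_{k+1}, …, e_{2k−k₀}})`
in `ℝⁿ`, the projection metric `d_proj(W, W′) = ‖P_W − P_{W′}‖` equals `1` whenever
`k₀ < k`, and equals `0` when `k₀ = k`; in particular it does not depend on `k₀` as long
as `k₀ < k`. -/
theorem projection_metric_coordinate_subspaces {n k k₀ : ℕ}
    (h₁ : k₀ ≤ k) (h₂ : 2 * k - k₀ ≤ n) :
    let W : Submodule ℝ (EuclideanSpace ℝ (Fin n)) :=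
      Submodule.span ℝ
        {x | ∃ j : Fin n, (j : ℕ) < k ∧ x = EuclideanSpace.single j (1 : ℝ)}
    let W' : Submodule ℝ (EuclideanSpace ℝ (Fin n)) :=
      Submodule.span ℝ
        {x | ∃ j : Fin n, ((j : ℕ) < k₀ ∨ (k ≤ (j : ℕ) ∧ (j : ℕ) < 2 * k - k₀)) ∧
          x = EuclideanSpace.single j (1 : ℝ)}
    let PW : EuclideanSpace ℝ (Fin n) →L[ℝ] EuclideanSpace ℝ (Fin n) :=
      W.subtypeL.comp (orthogonalProjection W)
    let PW' : EuclideanSpace ℝ (Fin n) →L[ℝ] EuclideanSpace ℝ (Fin n) :=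
      W'.subtypeL.comp (orthogonalProjection W')
    (k₀ < k → ‖PW - PW'‖ = 1) ∧ (k₀ = k → ‖PW - PW'‖ = 0) :=
  projection_metric_coordinate_subspaces_general h₂
end
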